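/- Let (S, Σ) be a measurable space, {μ_n} a sequence of measures converging setwise to a finite measure μ, and {f_n} a sequence of measurable extended-real-valued functions on S that lower semi-converges to a measurable real-valued function f in measure μ. Suppose there exists a sequence of measurable real-valued functions {g_n} on S with f_n(s) ≥ g_n(s) for all n and all s ∈ S such that −∞ < ∫_S limsup_{n→∞} g_n(s) μ(ds) ≤ liminf_{n→∞} ∫_S g_n(s) μ_n(ds). Then ∫_S f(s) μ(ds) ≤ liminf_{n→∞} ∫_S f_n(s) μ_n(ds), provided all integrals appearing are defined. -/

import Mathlib

open MeasureTheory Filter Metric Topology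
open scoped ENNReal

/-- The positive part of an extended real, as a value in `ℝ≥0∞`. -/
noncomputable def EReal.posENN (x : EReal) : ℝ≥0∞ := (max x 0).abs

/-- The negative part of an extended real, as a value in `ℝ≥0∞`. -/
noncomputable def EReal.negENN (x : EReal) : ℝ≥0∞ := (max (-x) 0).abs

/-- The integral of an extended-real-valued function: `∫ f⁺ dμ − ∫ f⁻ dμ` (in `EReal`). -/
noncomputable def eIntegral {S : Type*} [MeasurableSpace S]
    (μ : Measure S) (f : S → EReal) : EReal :=
  ((∫⁻ s, (f s).posENN ∂μ : ℝ≥0∞) : EReal) - ((∫⁻ s, (f s).negENN ∂μ : ℝ≥0∞) : EReal)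

/-- The integral of `f` w.r.t. `μ` is defined: at least one of `∫ f⁺ dμ`, `∫ f⁻ dμ` is finite. -/
def IntegralDefined {S : Type*} [MeasurableSpace S] (μ : Measure S) (f : S → EReal) : Prop :=
  (∫⁻ s, (f s).posENN ∂μ) ≠ ⊤ ∨ (∫⁻ s, (f s).negENN ∂μ) ≠ ⊤

/-- The integral `∫_S |f(s)| 1{|f(s)| ≥ K} μ(ds)`. -/
noncomputable def tailIntegral {S : Type*} [MeasurableSpace S]
    (μ : Measure S) (f : S → EReal) (K : ℝ) : ℝ≥0∞ :=
  ∫⁻ s in {s | (K : EReal) ≤ (f s).abs}, (f s).abs ∂μ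

/-- `{f_n}` is asymptotically uniformly integrable w.r.t. `{μ_n}`. -/
def AUI {S : Type*} [MeasurableSpace S] (μ : ℕ → Measure S) (f : ℕ → S → EReal) : Prop :=
  Tendsto (fun K : ℝ => limsup (fun n => tailIntegral (μ n) (f n) K) atTop) atTop (𝓝 0)

/-- `{μ_n}` converges setwise to `μ`: `μ_n(C) → μ(C)` for every measurable set `C`. -/
def SetwiseConv {S : Type*} [MeasurableSpace S] (μ : ℕ → Measure S) (ν : Measure S) : Prop :=
  ∀ C : Set S, MeasurableSet C → Tendsto (fun n => μ n C) atTop (𝓝 (ν C))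

/-- `{f_n}` lower semi-converges to `f` in measure `μ`:
`μ({s : f_n(s) ≤ f(s) − ε}) → 0` for every `ε > 0`. -/
def LowerSemiConvInMeasureE {S : Type*} [MeasurableSpace S]
    (f : ℕ → S → EReal) (g : S → ℝ) (μ : Measure S) : Prop :=
  ∀ ε : ℝ, 0 < ε → Tendsto (fun n => μ {s | f n s ≤ ((g s : ℝ) : EReal) - (ε : EReal)})
    atTop (𝓝 0)

/-!
Pass to a subsequence along which `∫ f n ∂μ n` tends to its lower limit, and then, by
Borel–Cantelli, to a further one along which `g ≤ liminf f n` holds `ν`-a.e. With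
`L = limsup G n`, the nonnegative functions `(f n - G n)⁺` then satisfy
`(g - L)⁺ ≤ liminf (f n - G n)⁺` a.e., so Fatou's lemma for setwise converging measures gives
`∫ (g - L)⁺ ∂ν ≤ liminf ∫ (f n - G n)⁺ ∂μ n`. Adding `∫ L ∂ν ≤ liminf ∫ G n ∂μ n` and using
`g ≤ (g - L)⁺ + L`, `f n = (f n - G n)⁺ + G n` gives the claim; the integrals split additively
because `∫ L⁻ ∂ν < ∞`.
-/

open scoped NNReal

namespace EReal

lemma posENN_eq_toENNReal (x : EReal) : x.posENN = x.toENNReal := by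
  induction x using EReal.rec with
  | bot => simp [posENN]
  | top => simp [posENN]
  | coe r =>
    rcases le_total r 0 with h | h
    · rw [posENN, max_eq_right (by exact_mod_cast h), EReal.abs_zero, real_coe_toENNReal,
        ENNReal.ofReal_of_nonpos h]
    · rw [posENN, max_eq_left (by exact_mod_cast h), EReal.abs_def, abs_of_nonneg h,
        real_coe_toENNReal]

lemma negENN_eq_toENNReal_neg (x : EReal) : x.negENN = (-x).toENNReal :=
  posENN_eq_toENNReal (-x)

-- `(a + v)⁺ - (a + v)⁻ = a + v⁺ - v⁻`, with the negative parts moved across so that it holds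
-- in `ℝ≥0∞`.
lemma toENNReal_coe_add_add_toENNReal_neg (a : ℝ≥0∞) (v : EReal) :
    ((a : EReal) + v).toENNReal + (-v).toENNReal
      = a + v.toENNReal + (-((a : EReal) + v)).toENNReal := by
  induction v using EReal.rec with
  | bot => simp
  | top => simp
  | coe r =>
    induction a with
    | top => simp
    | coe t =>
      rw [EReal.coe_nnreal_eq_coe_real, ← EReal.coe_add, ← EReal.coe_neg, ← EReal.coe_neg,
        real_coe_toENNReal, real_coe_toENNReal, real_coe_toENNReal, real_coe_toENNReal,
        ← ENNReal.ofReal_coe_nnreal]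
      have ht := t.coe_nonneg
      generalize (t : ℝ) = t at *
      rcases le_total 0 r with hr | hr
      · rw [ENNReal.ofReal_add ht hr, ENNReal.ofReal_of_nonpos (by linarith : -r ≤ 0),
          ENNReal.ofReal_of_nonpos (by linarith : -(t + r) ≤ 0)]
      rw [ENNReal.ofReal_of_nonpos hr, add_zero]
      rcases le_total 0 (t + r) with h | h
      · rw [← ENNReal.ofReal_add h (by linarith),
          ENNReal.ofReal_of_nonpos (by linarith : -(t + r) ≤ 0)]
        ring_nf
      · rw [← ENNReal.ofReal_add ht (by linarith), ENNReal.ofReal_of_nonpos h]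
        ring_nf

lemma coe_sub_eq_coe_add_coe_sub {A B C D E : ℝ≥0∞} (hB : B ≠ ∞) (hE : E ≠ ∞)
    (h : A + E = C + D + B) : (A : EReal) - B = C + (D - E) := by
  have h' : (A : EReal) + (E.toReal : EReal) = C + D + (B.toReal : EReal) := by
    rw [coe_ennreal_toReal hB, coe_ennreal_toReal hE]
    exact_mod_cast h
  rw [← coe_ennreal_toReal hB, ← coe_ennreal_toReal hE]
  calc (A : EReal) - B.toReal = (A + E.toReal - E.toReal) - B.toReal := by
        rw [add_sub_cancel_right]
    _ = C + (D - E.toReal) + (B.toReal - B.toReal) := by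
        rw [h']; simp only [sub_eq_add_neg]; ac_rfl
    _ = C + (D - E.toReal) := by rw [← coe_sub, _root_.sub_self, coe_zero, add_zero]

lemma le_coe_toENNReal_sub_add (x : EReal) {y : EReal} (hy : y ≠ ⊥) :
    x ≤ ((x - y).toENNReal : EReal) + y := by
  induction y using EReal.rec with
  | bot => exact absurd rfl hy
  | top => simp
  | coe r =>
    calc x = x - r + r := sub_add_cancel.symm
      _ ≤ ((x - r).toENNReal : EReal) + r := by
        gcongr
        rw [coe_toENNReal_eq_max]
        exact le_max_right _ _

lemma coe_toENNReal_sub_add_cancel {x : EReal} {r : ℝ} (h : (r : EReal) ≤ x) :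
    ((x - r).toENNReal : EReal) + r = x := by
  rw [coe_toENNReal ((sub_nonneg (.inr (coe_ne_top r)) (.inr (coe_ne_bot r))).2 h),
    sub_add_cancel]

lemma toENNReal_sub_le_liminf {u v : ℕ → EReal} {a b : EReal} (ha : a ≤ liminf u atTop)
    (hb : limsup v atTop ≤ b) :
    (a - b).toENNReal ≤ liminf (fun n => (u n - v n).toENNReal) atTop := by
  refine (toENNReal_le_toENNReal ?_).trans_eq (Monotone.map_liminf_of_continuousAt
    (fun _ _ => toENNReal_le_toENNReal) (fun n => u n - v n) continuous_toENNReal.continuousAt)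
  calc a - b ≤ liminf u atTop - limsup v atTop := sub_le_sub ha hb
    _ = liminf u atTop + liminf (-v) atTop := by rw [liminf_neg, sub_eq_add_neg]
    _ ≤ liminf (fun n => u n - v n) atTop := le_liminf_add

end EReal

section eIntegral

variable {S : Type*} [MeasurableSpace S] {μ : Measure S}

lemma eIntegral_eq_toENNReal (f : S → EReal) :
    eIntegral μ f = ((∫⁻ s, (f s).toENNReal ∂μ : ℝ≥0∞) : EReal)
      - ((∫⁻ s, (-f s).toENNReal ∂μ : ℝ≥0∞) : EReal) := by
  simp only [eIntegral, EReal.posENN_eq_toENNReal, EReal.negENN_eq_toENNReal_neg]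

lemma eIntegral_eq_bot {f : S → EReal} (hf : ∫⁻ s, (-f s).toENNReal ∂μ = ∞) :
    eIntegral μ f = ⊥ := by
  rw [eIntegral_eq_toENNReal, hf, EReal.coe_ennreal_top, EReal.sub_top]

lemma eIntegral_mono_ae {f g : S → EReal} (h : f ≤ᵐ[μ] g) : eIntegral μ f ≤ eIntegral μ g := by
  simp only [eIntegral_eq_toENNReal]
  refine EReal.sub_le_sub (EReal.coe_ennreal_le_coe_ennreal_iff.2 (lintegral_mono_ae ?_))
    (EReal.coe_ennreal_le_coe_ennreal_iff.2 (lintegral_mono_ae ?_))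
  · filter_upwards [h] with s hs using EReal.toENNReal_le_toENNReal hs
  · filter_upwards [h] with s hs using EReal.toENNReal_le_toENNReal (EReal.neg_le_neg_iff.2 hs)

lemma eIntegral_coe_add {u : S → ℝ≥0∞} {v : S → EReal} (hu : Measurable u) (hv : Measurable v)
    (hv' : ∫⁻ s, (-v s).toENNReal ∂μ ≠ ∞) :
    eIntegral μ (fun s => (u s : EReal) + v s)
      = ((∫⁻ s, u s ∂μ : ℝ≥0∞) : EReal) + eIntegral μ v := by
  have hneg : ∫⁻ s, (-((u s : EReal) + v s)).toENNReal ∂μ ≠ ∞ := by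
    refine ne_top_of_le_ne_top hv' (lintegral_mono fun s => EReal.toENNReal_le_toENNReal ?_)
    simpa using EReal.neg_le_neg_iff.2 (add_le_add_left (EReal.coe_ennreal_nonneg (u s)) (v s))
  have hsum := lintegral_congr (μ := μ) fun s =>
    EReal.toENNReal_coe_add_add_toENNReal_neg (u s) (v s)
  rw [lintegral_add_right (g := fun s => (-v s).toENNReal) _ hv.neg.ereal_toENNReal,
    lintegral_add_left (f := fun s => u s + (v s).toENNReal) (hu.add hv.ereal_toENNReal),
    lintegral_add_left hu] at hsum
  rw [eIntegral_eq_toENNReal, eIntegral_eq_toENNReal]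
  exact EReal.coe_sub_eq_coe_add_coe_sub hneg hv' hsum

lemma coe_lintegral_add_eIntegral_le {u : S → ℝ≥0∞} {v w : S → EReal} (hu : Measurable u)
    (hv : Measurable v) (h : ∀ᵐ s ∂μ, (u s : EReal) + v s ≤ w s) :
    ((∫⁻ s, u s ∂μ : ℝ≥0∞) : EReal) + eIntegral μ v ≤ eIntegral μ w := by
  by_cases hv' : ∫⁻ s, (-v s).toENNReal ∂μ = ∞
  · rw [eIntegral_eq_bot hv', EReal.add_bot]
    exact bot_le
  · rw [← eIntegral_coe_add hu hv hv']
    exact eIntegral_mono_ae h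

lemma eIntegral_le_coe_lintegral_add {u : S → ℝ≥0∞} {v w : S → EReal} (hu : Measurable u)
    (hv : Measurable v) (hv' : ∫⁻ s, (-v s).toENNReal ∂μ ≠ ∞)
    (h : ∀ᵐ s ∂μ, w s ≤ (u s : EReal) + v s) :
    eIntegral μ w ≤ ((∫⁻ s, u s ∂μ : ℝ≥0∞) : EReal) + eIntegral μ v := by
  rw [← eIntegral_coe_add hu hv hv']
  exact eIntegral_mono_ae h

end eIntegral

namespace SetwiseConv

variable {S : Type*} [MeasurableSpace S] {μ : ℕ → Measure S} {ν : Measure S}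

lemma comp (hsw : SetwiseConv μ ν) {ψ : ℕ → ℕ} (hψ : Tendsto ψ atTop atTop) :
    SetwiseConv (fun k => μ (ψ k)) ν :=
  fun C hC => (hsw C hC).comp hψ

lemma tendsto_lintegral_simpleFunc (hsw : SetwiseConv μ ν) (φ : SimpleFunc S ℝ≥0) :
    Tendsto (fun n => (φ.map ((↑) : ℝ≥0 → ℝ≥0∞)).lintegral (μ n)) atTop
      (𝓝 ((φ.map ((↑) : ℝ≥0 → ℝ≥0∞)).lintegral ν)) := by
  simp_rw [SimpleFunc.map_lintegral]
  exact tendsto_finsetSum _ fun x _ =>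
    ENNReal.Tendsto.const_mul (hsw _ (φ.measurableSet_fiber x)) (.inr ENNReal.coe_ne_top)

lemma lintegral_le_liminf_lintegral (hsw : SetwiseConv μ ν) (h : S → ℝ≥0∞) :
    ∫⁻ s, h s ∂ν ≤ liminf (fun n => ∫⁻ s, h s ∂(μ n)) atTop := by
  rw [lintegral_eq_nnreal h ν]
  refine iSup₂_le fun φ hφ => ?_
  rw [← (hsw.tendsto_lintegral_simpleFunc φ).liminf_eq]
  refine liminf_le_liminf (Eventually.of_forall fun n => ?_)
  rw [← SimpleFunc.lintegral_eq_lintegral]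
  exact lintegral_mono hφ

lemma lintegral_liminf_le (hsw : SetwiseConv μ ν) {h : ℕ → S → ℝ≥0∞}
    (hh : ∀ n, Measurable (h n)) :
    ∫⁻ s, liminf (fun n => h n s) atTop ∂ν ≤ liminf (fun n => ∫⁻ s, h n s ∂(μ n)) atTop := by
  calc ∫⁻ s, liminf (fun n => h n s) atTop ∂ν = ⨆ m, ∫⁻ s, ⨅ n ≥ m, h n s ∂ν := by
        simp_rw [liminf_eq_iSup_iInf_of_nat]
        exact lintegral_iSup (fun m => .iInf fun n => .iInf fun _ => hh n)
          fun m m' hmm s => le_iInf₂ fun n hn => iInf₂_le n (hmm.trans hn)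
    _ ≤ liminf (fun n => ∫⁻ s, h n s ∂(μ n)) atTop := by
        refine iSup_le fun m => (hsw.lintegral_le_liminf_lintegral _).trans ?_
        refine liminf_le_liminf (eventually_atTop.2 ⟨m, fun n hn => ?_⟩)
        exact lintegral_mono fun s => iInf₂_le n hn

end SetwiseConv

namespace LowerSemiConvInMeasureE

variable {S : Type*} [MeasurableSpace S] {f : ℕ → S → EReal} {g : S → ℝ} {ν : Measure S}

lemma comp (h : LowerSemiConvInMeasureE f g ν) {ψ : ℕ → ℕ} (hψ : Tendsto ψ atTop atTop) :
    LowerSemiConvInMeasureE (fun k => f (ψ k)) g ν :=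
  fun ε hε => (h ε hε).comp hψ

lemma exists_subseq_ae_le_liminf (h : LowerSemiConvInMeasureE f g ν) :
    ∃ φ : ℕ → ℕ, StrictMono φ ∧
      ∀ᵐ s ∂ν, ((g s : ℝ) : EReal) ≤ liminf (fun k => f (φ k) s) atTop := by
  obtain ⟨φ, hφ, hsmall⟩ := extraction_forall_of_eventually fun k =>
    (h ((2⁻¹ : ℝ) ^ k) (by positivity)).eventually_lt_const
      (ENNReal.pow_pos (ENNReal.inv_pos.2 ENNReal.ofNat_ne_top) k : (0 : ℝ≥0∞) < 2⁻¹ ^ k)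
  refine ⟨φ, hφ, ?_⟩
  have hsum :
      ∑' k, ν {s | f (φ k) s ≤ ((g s : ℝ) : EReal) - (((2⁻¹ : ℝ) ^ k : ℝ) : EReal)} ≠ ∞ :=
    ne_top_of_le_ne_top (by simp [ENNReal.tsum_geometric])
      (ENNReal.tsum_le_tsum fun k => (hsmall k).le)
  filter_upwards [ae_eventually_notMem hsum] with s hs
  have hlim : Tendsto (fun k => ((g s - (2⁻¹ : ℝ) ^ k : ℝ) : EReal)) atTop (𝓝 (g s)) := by
    refine EReal.tendsto_coe.2 ?_
    simpa using tendsto_const_nhds.sub (tendsto_pow_atTop_nhds_zero_of_lt_one (by norm_num)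
      (by norm_num : (2⁻¹ : ℝ) < 1))
  calc ((g s : ℝ) : EReal) = liminf (fun k => ((g s - (2⁻¹ : ℝ) ^ k : ℝ) : EReal)) atTop :=
        hlim.liminf_eq.symm
    _ ≤ liminf (fun k => f (φ k) s) atTop :=
        liminf_le_liminf (hs.mono fun k hk => (not_le.1 hk).le)

end LowerSemiConvInMeasureE

theorem eIntegral_le_liminf_of_ae_le_liminf_of_minorant {S : Type*} [MeasurableSpace S]
    {μ : ℕ → Measure S} {ν : Measure S}
    (hsw : SetwiseConv μ ν) {f : ℕ → S → EReal} (hf : ∀ n, Measurable (f n))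
    {G : ℕ → S → ℝ} (hG : ∀ n, Measurable (G n)) (hfG : ∀ n s, ((G n s : ℝ) : EReal) ≤ f n s)
    {g L : S → EReal} (hg : Measurable g) (hL : Measurable L)
    (hL_neg : ∫⁻ s, (-L s).toENNReal ∂ν ≠ ∞)
    (hGL : ∀ s, limsup (fun n => ((G n s : ℝ) : EReal)) atTop ≤ L s)
    (hgf : ∀ᵐ s ∂ν, g s ≤ liminf (fun n => f n s) atTop)
    (hLG : eIntegral ν L
      ≤ liminf (fun n => eIntegral (μ n) (fun s => ((G n s : ℝ) : EReal))) atTop) :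
    eIntegral ν g ≤ liminf (fun n => eIntegral (μ n) (f n)) atTop := by
  have hL_ne_bot : ∀ᵐ s ∂ν, L s ≠ ⊥ := by
    filter_upwards [ae_lt_top hL.neg.ereal_toENNReal hL_neg] with s hs
    exact fun h => hs.ne (by simp [h])
  set q : ℕ → S → ℝ≥0∞ := fun n s => (f n s - G n s).toENNReal
  have hq : ∀ n, Measurable (q n) := fun n => ((hf n).sub (hG n).coe_real_ereal).ereal_toENNReal
  have hfatou : (((∫⁻ s, (g s - L s).toENNReal ∂ν) : ℝ≥0∞) : EReal)
      ≤ liminf (fun n => ((∫⁻ s, q n s ∂(μ n) : ℝ≥0∞) : EReal)) atTop := by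
    refine EReal.coe_ennreal_le_coe_ennreal_iff.2 ?_ |>.trans_eq <|
      Monotone.map_liminf_of_continuousAt (fun _ _ => EReal.coe_ennreal_le_coe_ennreal_iff.2) _
        continuous_coe_ennreal_ereal.continuousAt
    calc ∫⁻ s, (g s - L s).toENNReal ∂ν ≤ ∫⁻ s, liminf (fun n => q n s) atTop ∂ν := by
          refine lintegral_mono_ae ?_
          filter_upwards [hgf] with s hs using EReal.toENNReal_sub_le_liminf hs (hGL s)
      _ ≤ liminf (fun n => ∫⁻ s, q n s ∂(μ n)) atTop := hsw.lintegral_liminf_le hq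
  calc eIntegral ν g ≤ ((∫⁻ s, (g s - L s).toENNReal ∂ν : ℝ≥0∞) : EReal) + eIntegral ν L := by
        refine eIntegral_le_coe_lintegral_add (hg.sub hL).ereal_toENNReal hL hL_neg ?_
        filter_upwards [hL_ne_bot] with s hs using EReal.le_coe_toENNReal_sub_add _ hs
    _ ≤ liminf (fun n => ((∫⁻ s, q n s ∂(μ n) : ℝ≥0∞) : EReal)) atTop
        + liminf (fun n => eIntegral (μ n) (fun s => ((G n s : ℝ) : EReal))) atTop :=
        add_le_add hfatou hLG
    _ ≤ liminf (fun n => ((∫⁻ s, q n s ∂(μ n) : ℝ≥0∞) : EReal)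
        + eIntegral (μ n) (fun s => ((G n s : ℝ) : EReal))) atTop := EReal.le_liminf_add
    _ ≤ liminf (fun n => eIntegral (μ n) (f n)) atTop := by
        refine liminf_le_liminf (Eventually.of_forall fun n => ?_)
        refine coe_lintegral_add_eIntegral_le (hq n) (hG n).coe_real_ereal
          (Eventually.of_forall fun s => ?_)
        exact (EReal.coe_toENNReal_sub_add_cancel (hfG n s)).le

theorem fatou_classic_setwise_minorant_general {S : Type*} [MeasurableSpace S]
    (μ : ℕ → Measure S) (ν : Measure S) (hsw : SetwiseConv μ ν)
    (f : ℕ → S → EReal) (hf : ∀ n, Measurable (f n))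
    (g : S → ℝ) (hg : Measurable g)
    (hconv : LowerSemiConvInMeasureE f g ν)
    (G : ℕ → S → ℝ) (hG : ∀ n, Measurable (G n))
    (hfG : ∀ n s, ((G n s : ℝ) : EReal) ≤ f n s)
    (hGbd : (⊥ : EReal) < eIntegral ν (fun s => limsup (fun n => ((G n s : ℝ) : EReal)) atTop))
    (hGle : eIntegral ν (fun s => limsup (fun n => ((G n s : ℝ) : EReal)) atTop)
      ≤ liminf (fun n => eIntegral (μ n) (fun s => ((G n s : ℝ) : EReal))) atTop) :
    eIntegral ν (fun s => ((g s : ℝ) : EReal))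
      ≤ liminf (fun n => eIntegral (μ n) (f n)) atTop := by
  obtain ⟨ψ, hψ, hψ_lim⟩ :=
    (MapClusterPt.liminf (u := fun n => eIntegral (μ n) (f n)) (f := atTop)).tendsto_subseq
  obtain ⟨φ, hφ, hφ_ae⟩ := (hconv.comp hψ.tendsto_atTop).exists_subseq_ae_le_liminf
  have hθ : Tendsto (fun k => ψ (φ k)) atTop atTop := (hψ.comp hφ).tendsto_atTop
  have hGL : ∀ s, limsup (fun k => ((G (ψ (φ k)) s : ℝ) : EReal)) atTop
      ≤ limsup (fun n => ((G n s : ℝ) : EReal)) atTop := fun s =>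
    hθ.limsup_comp_le_limsup (u := fun n => ((G n s : ℝ) : EReal))
  have hLG := hGle.trans <|
    hθ.liminf_le_liminf_comp (u := fun n => eIntegral (μ n) fun s => ((G n s : ℝ) : EReal))
  calc eIntegral ν (fun s => ((g s : ℝ) : EReal))
      ≤ liminf (fun k => eIntegral (μ (ψ (φ k))) (f (ψ (φ k)))) atTop :=
        eIntegral_le_liminf_of_ae_le_liminf_of_minorant (hsw.comp hθ) (fun _ => hf _)
          (fun _ => hG _) (fun _ => hfG _) hg.coe_real_ereal
          (.limsup fun n => (hG n).coe_real_ereal)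
          (fun h => hGbd.ne' (eIntegral_eq_bot h)) hGL hφ_ae hLG
    _ = liminf (fun n => eIntegral (μ n) (f n)) atTop := (hψ_lim.comp hφ.tendsto_atTop).liminf_eq

/-- Fatou's lemma in its classic form for setwise converging measures, minorant version
(Corollary 4.3). -/
theorem fatou_classic_setwise_minorant {S : Type*} [MeasurableSpace S]
    (μ : ℕ → Measure S) (ν : Measure S) [IsFiniteMeasure ν] (hsw : SetwiseConv μ ν)
    (f : ℕ → S → EReal) (hf : ∀ n, Measurable (f n))
    (g : S → ℝ) (hg : Measurable g)
    (hconv : LowerSemiConvInMeasureE f g ν)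
    (G : ℕ → S → ℝ) (hG : ∀ n, Measurable (G n))
    (hfG : ∀ n s, ((G n s : ℝ) : EReal) ≤ f n s)
    (hGbd : (⊥ : EReal) < eIntegral ν (fun s => limsup (fun n => ((G n s : ℝ) : EReal)) atTop))
    (hGle : eIntegral ν (fun s => limsup (fun n => ((G n s : ℝ) : EReal)) atTop)
      ≤ liminf (fun n => eIntegral (μ n) (fun s => ((G n s : ℝ) : EReal))) atTop)
    (hdef : ∀ n, IntegralDefined (μ n) (f n))
    (hdef' : IntegralDefined ν (fun s => ((g s : ℝ) : EReal)))
    (hdefG : ∀ n, IntegralDefined (μ n) (fun s => ((G n s : ℝ) : EReal)))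
    (hdefG' : IntegralDefined ν (fun s => limsup (fun n => ((G n s : ℝ) : EReal)) atTop)) :
    eIntegral ν (fun s => ((g s : ℝ) : EReal))
      ≤ liminf (fun n => eIntegral (μ n) (f n)) atTop :=
  fatou_classic_setwise_minorant_general μ ν hsw f hf g hg hconv G hG hfG hGbd hGle
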